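/- Let d ≥ 2, 0 < α < 2, and let β₁, β₂, β₃, β₄ ≥ 0 with β₁ > 0 if β₃ > 0 and β₂ > 0 if β₄ > 0. Let p satisfy (α−1)₊ < p < α + (β₁ + (β₁ ∧ β₂))/2. Then there exists a constant C > 0, depending only on d, α, p, β₁, β₂, β₃, β₄, such that for all x, y ∈ ℝ^d_+ with |x̃ − ỹ| > 3 and 0 < x_d, y_d < 1/4, one has ∫_{D_x̃(1,1)} ∫_{D_ỹ(1,1)} (x_d/|w−x| ∧ 1)^p (y_d/|z−y| ∧ 1)^p [(w_d ∧ z_d)^{β₁} (w_d ∨ z_d)^{β₂} / (|x−w|^{d−α} |y−z|^{d−α})] (log(1 + (w_d ∨ z_d)/(w_d ∧ z_d)))^{β₃} (log(1 + 8/(w_d ∨ z_d)))^{β₄} dz dw ≤ C x_d^p y_d^p. -/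

import Mathlib

open MeasureTheory Real
open Set Metric

noncomputable section

/-- Points of `ℝ^d`, written as pairs `(x̃, x_d) ∈ ℝ^{d-1} × ℝ` (here `m = d - 1`). -/
abbrev Pt (m : ℕ) := EuclideanSpace ℝ (Fin m) × ℝ

/-- The Euclidean norm on `Pt m`. -/
noncomputable def nrm {m : ℕ} (x : Pt m) : ℝ := Real.sqrt (‖x.1‖ ^ 2 + x.2 ^ 2)

/-- The box `D_w̃(a,b) = {y = (ỹ, y_d) : |ỹ - w̃| < a, 0 < y_d < b}`. -/
def Dbox {m : ℕ} (w : EuclideanSpace ℝ (Fin m)) (a b : ℝ) : Set (Pt m) :=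
  {y | ‖y.1 - w‖ < a ∧ 0 < y.2 ∧ y.2 < b}

/-- The function `f(y; γ, β, q, δ, x)`. -/
noncomputable def ff {m : ℕ} (d : ℕ) (α R γ β q δ : ℝ) (x y : Pt m) : ℝ :=
  y.2 ^ γ * nrm (x - y) ^ (-(d : ℝ) + α - q) * (Real.log (1 + 2 * R / y.2)) ^ β *
    (Real.log (1 + nrm (x - y) / min (max x.2 y.2) (nrm (x - y)))) ^ δ

/-!
Bounding the logarithms by small powers, the weight
`(w_d ∧ z_d)^β₁ (w_d ∨ z_d)^β₂ log(1 + (w_d ∨ z_d)/(w_d ∧ z_d))^β₃ log(1 + 8/(w_d ∨ z_d))^β₄`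
is at most `C (w_d z_d)^γ` for every `0 ≤ γ < (β₁ + β₁ ∧ β₂)/2`, and also for `γ = 0`.
Since `w_d ≤ x_d + |x - w|`, for `γ ≤ p` one has
`(x_d/|w - x| ∧ 1)^p w_d^γ ≤ 2^γ x_d^p |x - w|^(γ - p)`, so the integrand is at most
`C x_d^p y_d^p |x - w|^(γ - p - d + α) |y - z|^(γ - p - d + α)` and the double integral splits.
Taking `γ > p - α`, which the upper bound on `p` allows, the exponent exceeds `-d`, so each
factor is bounded by the integral of `|v|^(γ - p - d + α)` over a unit ball.
-/

theorem exists_log_one_add_rpow_le_mul_rpow {β ε : ℝ} (hβ : 0 ≤ β) (hε : 0 ≤ ε)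
    (hβε : 0 < β → 0 < ε) : ∃ C > 0, ∀ t : ℝ, 1 ≤ t → log (1 + t) ^ β ≤ C * t ^ ε := by
  rcases hβ.eq_or_lt with rfl | hβ
  · exact ⟨1, one_pos, fun t ht => by simpa using one_le_rpow ht hε⟩
  set δ := ε / β
  have hδ : 0 < δ := div_pos (hβε hβ) hβ
  refine ⟨(2 ^ δ / δ) ^ β, by positivity, fun t ht => ?_⟩
  have ht0 : 0 < t := one_pos.trans_le ht
  have hlog : log (1 + t) ≤ 2 ^ δ / δ * t ^ δ :=
    calc log (1 + t) ≤ (1 + t) ^ δ / δ := log_le_rpow_div (by linarith) hδ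
      _ ≤ (2 * t) ^ δ / δ := by gcongr; linarith
      _ = 2 ^ δ / δ * t ^ δ := by rw [mul_rpow zero_le_two ht0.le]; ring
  calc log (1 + t) ^ β ≤ (2 ^ δ / δ * t ^ δ) ^ β :=
        rpow_le_rpow (log_nonneg (by linarith)) hlog hβ.le
    _ = (2 ^ δ / δ) ^ β * t ^ ε := by
        rw [mul_rpow (by positivity) (by positivity), ← rpow_mul ht0.le, div_mul_cancel₀ _ hβ.ne']

theorem exists_log_one_add_div_rpow_le_mul_rpow_neg {a β ε : ℝ} (ha : 1 ≤ a) (hβ : 0 ≤ β)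
    (hε : 0 ≤ ε) (hβε : 0 < β → 0 < ε) :
    ∃ C > 0, ∀ s : ℝ, 0 < s → s ≤ 1 → log (1 + a / s) ^ β ≤ C * s ^ (-ε) := by
  obtain ⟨C, hC, hlog⟩ := exists_log_one_add_rpow_le_mul_rpow hβ hε hβε
  have ha0 : 0 < a := one_pos.trans_le ha
  refine ⟨C * a ^ ε, by positivity, fun s hs hs1 => ?_⟩
  calc log (1 + a / s) ^ β ≤ C * (a / s) ^ ε := hlog _ ((one_le_div hs).2 (hs1.trans ha))
    _ = C * a ^ ε * s ^ (-ε) := by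
        rw [div_rpow ha0.le hs.le, rpow_neg hs.le, div_eq_mul_inv, mul_assoc]

theorem rpow_mul_rpow_le_mul_rpow {u v a b γ : ℝ} (hu : 0 < u) (huv : u ≤ v) (hv : v ≤ 1)
    (hγ : 2 * γ ≤ a + min a b) : u ^ a * v ^ b ≤ (u * v) ^ γ := by
  have hv0 : 0 < v := hu.trans_le huv
  rw [mul_rpow hu.le hv0.le]
  rcases le_or_gt γ b with hb | hb
  · have ha : γ ≤ a := by linarith [min_le_left a b]
    exact mul_le_mul (rpow_le_rpow_of_exponent_ge hu (huv.trans hv) ha)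
      (rpow_le_rpow_of_exponent_ge hv0 hv hb) (by positivity) (by positivity)
  have ha : 0 ≤ a - γ := by linarith [min_le_right a b]
  calc u ^ a * v ^ b = u ^ γ * (u ^ (a - γ) * v ^ b) := by
        rw [← mul_assoc, ← rpow_add hu, add_sub_cancel]
    _ ≤ u ^ γ * (v ^ (a - γ) * v ^ b) := by gcongr
    _ = u ^ γ * v ^ (a - γ + b) := by rw [rpow_add hv0]
    _ ≤ u ^ γ * v ^ γ := mul_le_mul_of_nonneg_left
        (rpow_le_rpow_of_exponent_ge hv0 hv (by linarith [min_le_right a b])) (by positivity)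

theorem exists_weight_le_mul_rpow_of_le {β₁ β₂ β₃ β₄ γ t : ℝ} (hβ₁ : 0 ≤ β₁) (hβ₂ : 0 ≤ β₂)
    (hβ₃ : 0 ≤ β₃) (hβ₄ : 0 ≤ β₄) (h13 : 0 < β₃ → 0 < β₁) (h24 : 0 < β₄ → 0 < β₂)
    (ht0 : 0 < t) (ht1 : t ≤ 1) (hγt : γ ≤ (1 - t) * ((β₁ + min β₁ β₂) / 2)) :
    ∃ C > 0, ∀ u v : ℝ, 0 < u → u ≤ v → v ≤ 1 →
      u ^ β₁ * v ^ β₂ * log (1 + v / u) ^ β₃ * log (1 + 8 / v) ^ β₄ ≤ C * (u * v) ^ γ := by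
  obtain ⟨C₃, hC₃, hlog₃⟩ := exists_log_one_add_rpow_le_mul_rpow hβ₃ (by positivity)
    fun h => mul_pos ht0 (h13 h)
  obtain ⟨C₄, hC₄, hlog₄⟩ := exists_log_one_add_div_rpow_le_mul_rpow_neg (a := 8) (by norm_num)
    hβ₄ (by positivity) fun h => mul_pos ht0 (h24 h)
  have hexp : 2 * γ ≤ (1 - t) * β₁ + min ((1 - t) * β₁) (β₂ + t * β₁ - t * β₂) := by
    have : (1 - t) * min β₁ β₂ ≤ min ((1 - t) * β₁) (β₂ + t * β₁ - t * β₂) :=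
      le_min (mul_le_mul_of_nonneg_left (min_le_left _ _) (by linarith))
        (by nlinarith [min_le_right β₁ β₂, mul_nonneg ht0.le hβ₁])
    linarith
  refine ⟨C₃ * C₄, by positivity, fun u v hu huv hv => ?_⟩
  have hv0 : 0 < v := hu.trans_le huv
  calc u ^ β₁ * v ^ β₂ * log (1 + v / u) ^ β₃ * log (1 + 8 / v) ^ β₄
      ≤ u ^ β₁ * v ^ β₂ * (C₃ * (v / u) ^ (t * β₁)) * (C₄ * v ^ (-(t * β₂))) := by
        gcongr
        · exact rpow_nonneg (log_nonneg (le_add_of_nonneg_right (by positivity))) _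
        · exact hlog₃ _ ((one_le_div hu).2 huv)
        · exact hlog₄ v hv0 hv
    _ = C₃ * C₄ * (u ^ ((1 - t) * β₁) * v ^ (β₂ + t * β₁ - t * β₂)) := by
        rw [div_rpow hv0.le hu.le, rpow_neg hv0.le, sub_mul, one_mul, rpow_sub hu,
          rpow_sub hv0, rpow_add hv0]
        field_simp
    _ ≤ C₃ * C₄ * (u * v) ^ γ := by
        gcongr
        exact rpow_mul_rpow_le_mul_rpow hu huv hv hexp

theorem exists_weight_le_mul_rpow {β₁ β₂ β₃ β₄ γ : ℝ} (hβ₁ : 0 ≤ β₁) (hβ₂ : 0 ≤ β₂)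
    (hβ₃ : 0 ≤ β₃) (hβ₄ : 0 ≤ β₄) (h13 : 0 < β₃ → 0 < β₁) (h24 : 0 < β₄ → 0 < β₂)
    (hγ : 0 ≤ γ) (hγσ : γ < (β₁ + min β₁ β₂) / 2 ∨ γ = 0) :
    ∃ C > 0, ∀ u v : ℝ, 0 < u → u ≤ 1 → 0 < v → v ≤ 1 →
      min u v ^ β₁ * max u v ^ β₂ * log (1 + max u v / min u v) ^ β₃ *
        log (1 + 8 / max u v) ^ β₄ ≤ C * (u * v) ^ γ := by
  set σ := (β₁ + min β₁ β₂) / 2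
  obtain ⟨t, ht0, ht1, hγt⟩ : ∃ t : ℝ, 0 < t ∧ t ≤ 1 ∧ γ ≤ (1 - t) * σ := by
    rcases hγσ with hγσ | rfl
    · have hσ : 0 < σ := hγ.trans_lt hγσ
      refine ⟨1 - γ / σ, by rw [sub_pos, div_lt_one hσ]; exact hγσ, by
        linarith [div_nonneg hγ hσ.le], by rw [sub_sub_cancel, div_mul_cancel₀ _ hσ.ne']⟩
    · exact ⟨1, one_pos, le_rfl, by simp⟩
  obtain ⟨C, hC, hle⟩ :=
    exists_weight_le_mul_rpow_of_le hβ₁ hβ₂ hβ₃ hβ₄ h13 h24 ht0 ht1 hγt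
  refine ⟨C, hC, fun u v hu hu1 hv hv1 => ?_⟩
  rcases le_total u v with h | h
  · rw [min_eq_left h, max_eq_right h]
    exact hle u v hu h hv1
  · rw [min_eq_right h, max_eq_left h, mul_comm u v]
    exact hle v u hv h hu1

theorem min_div_one_rpow_mul_rpow_le {c N w p γ : ℝ} (hc : 0 < c) (hN : 0 < N) (hw : 0 ≤ w)
    (hwN : w ≤ c + N) (hγ : 0 ≤ γ) (hγp : γ ≤ p) :
    min (c / N) 1 ^ p * w ^ γ ≤ 2 ^ γ * c ^ p * N ^ (γ - p) := by
  have hM : 0 < max N c := hN.trans_le (le_max_left N c)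
  have hmin : min (c / N) 1 = c / max N c := by
    rcases le_total c N with h | h
    · rw [min_eq_left ((div_le_one hN).2 h), max_eq_left h]
    · rw [min_eq_right ((one_le_div hN).2 h), max_eq_right h, div_self hc.ne']
  calc min (c / N) 1 ^ p * w ^ γ ≤ (c / max N c) ^ p * (2 * max N c) ^ γ := by
        rw [hmin]
        gcongr
        linarith [le_max_left N c, le_max_right N c]
    _ = 2 ^ γ * c ^ p * max N c ^ (γ - p) := by
        rw [div_rpow hc.le hM.le, mul_rpow zero_le_two hM.le, rpow_sub hM]
        ring
    _ ≤ 2 ^ γ * c ^ p * N ^ (γ - p) := mul_le_mul_of_nonneg_left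
        (rpow_le_rpow_of_nonpos hN (le_max_left N c) (by linarith)) (by positivity)

theorem exists_exponent_between {α p σ : ℝ} (hα : 0 < α) (hp : 0 < p) (hpσ : p < α + σ) :
    ∃ γ, 0 ≤ γ ∧ γ ≤ p ∧ p - α < γ ∧ (γ < σ ∨ γ = 0) := by
  rcases lt_or_ge p α with h | h
  · exact ⟨0, le_rfl, hp.le, by linarith, Or.inr rfl⟩
  refine ⟨min p ((p - α + σ) / 2), le_min hp.le (by linarith), min_le_left _ _,
    lt_min (by linarith) (by linarith), Or.inl ((min_le_right _ _).trans_lt (by linarith))⟩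

theorem min_div_one_rpow_mul_weight_div_rpow_le {β₁ β₂ β₃ β₄ γ p s C a b N M u v : ℝ}
    (hs : 0 < s) (hγ : 0 ≤ γ) (hγp : γ ≤ p) (hC : 0 ≤ C)
    (hweight : min u v ^ β₁ * max u v ^ β₂ * log (1 + max u v / min u v) ^ β₃ *
      log (1 + 8 / max u v) ^ β₄ ≤ C * (u * v) ^ γ)
    (ha : 0 < a) (hb : 0 < b) (hN : 0 ≤ N) (hM : 0 ≤ M) (hu : 0 ≤ u) (hv : 0 ≤ v)
    (huN : u ≤ a + N) (hvM : v ≤ b + M) :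
    min (a / N) 1 ^ p * min (b / M) 1 ^ p * (min u v ^ β₁ * max u v ^ β₂ / (N ^ s * M ^ s)) *
        log (1 + max u v / min u v) ^ β₃ * log (1 + 8 / max u v) ^ β₄ ≤
      C * 4 ^ γ * a ^ p * b ^ p * N ^ (γ - p - s) * M ^ (γ - p - s) := by
  have he : γ - p - s ≠ 0 := by linarith
  rcases hN.eq_or_lt with rfl | hN
  · simp [zero_rpow hs.ne', zero_rpow he]
  rcases hM.eq_or_lt with rfl | hM
  · simp [zero_rpow hs.ne', zero_rpow he]
  calc min (a / N) 1 ^ p * min (b / M) 1 ^ p * (min u v ^ β₁ * max u v ^ β₂ / (N ^ s * M ^ s)) *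
        log (1 + max u v / min u v) ^ β₃ * log (1 + 8 / max u v) ^ β₄
      = min (a / N) 1 ^ p * min (b / M) 1 ^ p * (min u v ^ β₁ * max u v ^ β₂ *
          log (1 + max u v / min u v) ^ β₃ * log (1 + 8 / max u v) ^ β₄) / (N ^ s * M ^ s) := by
        ring
    _ ≤ min (a / N) 1 ^ p * min (b / M) 1 ^ p * (C * (u * v) ^ γ) / (N ^ s * M ^ s) := by
        gcongr
    _ = C * (min (a / N) 1 ^ p * u ^ γ) * (min (b / M) 1 ^ p * v ^ γ) / (N ^ s * M ^ s) := by
        rw [mul_rpow hu hv]; ring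
    _ ≤ C * (2 ^ γ * a ^ p * N ^ (γ - p)) * (2 ^ γ * b ^ p * M ^ (γ - p)) / (N ^ s * M ^ s) := by
        gcongr C * ?_ * ?_ / _
        · exact min_div_one_rpow_mul_rpow_le ha hN hu huN hγ hγp
        · exact min_div_one_rpow_mul_rpow_le hb hM hv hvM hγ hγp
    _ = C * 4 ^ γ * a ^ p * b ^ p * N ^ (γ - p - s) * M ^ (γ - p - s) := by
        rw [rpow_sub hN (γ - p) s, rpow_sub hM (γ - p) s, show (4 : ℝ) = 2 * 2 by norm_num,
          mul_rpow zero_le_two zero_le_two]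
        ring

theorem setLIntegral_setLIntegral_le_of_le_mul {α β : Type*} [MeasurableSpace α]
    [MeasurableSpace β] {μ : Measure α} {ν : Measure β} {s : Set α} {t : Set β}
    (hs : MeasurableSet s) (ht : MeasurableSet t) {F : α → β → ℝ} {f : α → ℝ} {g : β → ℝ}
    (hf : Measurable f) (hg : Measurable g) (hf0 : ∀ a, 0 ≤ f a) {K A B : ℝ} (hK : 0 ≤ K)
    (hA0 : 0 ≤ A) (hF : ∀ a ∈ s, ∀ b ∈ t, F a b ≤ K * f a * g b)
    (hA : ∫⁻ a in s, ENNReal.ofReal (f a) ∂μ ≤ ENNReal.ofReal A)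
    (hB : ∫⁻ b in t, ENNReal.ofReal (g b) ∂ν ≤ ENNReal.ofReal B) :
    ∫⁻ a in s, ∫⁻ b in t, ENNReal.ofReal (F a b) ∂ν ∂μ ≤ ENNReal.ofReal (K * A * B) := by
  calc ∫⁻ a in s, ∫⁻ b in t, ENNReal.ofReal (F a b) ∂ν ∂μ
      ≤ ∫⁻ a in s, ∫⁻ b in t, ENNReal.ofReal (K * f a) * ENNReal.ofReal (g b) ∂ν ∂μ :=
        setLIntegral_mono' hs fun a ha => setLIntegral_mono' ht fun b hb =>
          (ENNReal.ofReal_le_ofReal (hF a ha b hb)).trans_eq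
            (ENNReal.ofReal_mul (mul_nonneg hK (hf0 a)))
    _ = ENNReal.ofReal K * (∫⁻ a in s, ENNReal.ofReal (f a) ∂μ) *
          ∫⁻ b in t, ENNReal.ofReal (g b) ∂ν := by
        rw [lintegral_lintegral_mul (by fun_prop) (by fun_prop)]
        simp_rw [ENNReal.ofReal_mul hK]
        rw [lintegral_const_mul' _ _ ENNReal.ofReal_ne_top]
    _ ≤ ENNReal.ofReal K * ENNReal.ofReal A * ENNReal.ofReal B := by gcongr
    _ = ENNReal.ofReal (K * A * B) := by
        rw [ENNReal.ofReal_mul (mul_nonneg hK hA0), ENNReal.ofReal_mul hK]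

theorem lintegral_ball_norm_rpow_lt_top {E : Type*} [NormedAddCommGroup E] [NormedSpace ℝ E]
    [FiniteDimensional ℝ E] [MeasurableSpace E] [BorelSpace E] (μ : Measure E)
    [μ.IsAddHaarMeasure] (hE : 1 ≤ Module.finrank ℝ E) {e : ℝ}
    (he : -(Module.finrank ℝ E : ℝ) < e) (r : ℝ) :
    ∫⁻ v in ball 0 r, ENNReal.ofReal (‖v‖ ^ e) ∂μ < ⊤ := by
  refine (integrableOn_ball_of_norm_le_rpow (C := 1) (α := -e) hE (by linarith)
    (ae_of_all _ fun v => ?_)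
    (continuous_norm.measurable.pow_const e).aestronglyMeasurable).setLIntegral_lt_top
  rw [neg_neg, one_mul, norm_of_nonneg (rpow_nonneg (norm_nonneg v) e)]

instance (m : ℕ) : (volume : Measure (Pt m)).IsAddHaarMeasure :=
  Measure.prod.instIsAddHaarMeasure _ _

theorem nrm_sub_comm {m : ℕ} (v w : Pt m) : nrm (v - w) = nrm (w - v) := by
  rw [nrm, nrm, Prod.snd_sub, Prod.snd_sub, Prod.fst_sub, Prod.fst_sub, norm_sub_rev, sub_sq_comm]

theorem nrm_nonneg {m : ℕ} (v : Pt m) : 0 ≤ nrm v :=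
  sqrt_nonneg _

theorem abs_snd_le_nrm {m : ℕ} (v : Pt m) : |v.2| ≤ nrm v :=
  abs_le_sqrt (le_add_of_nonneg_left (by positivity))

theorem norm_le_nrm {m : ℕ} (v : Pt m) : ‖v‖ ≤ nrm v := by
  refine max_le ((le_sqrt (norm_nonneg _) (by positivity)).2
    (le_add_of_nonneg_right (by positivity))) ?_
  exact (norm_eq_abs v.2).trans_le (abs_snd_le_nrm v)

theorem snd_le_snd_add_nrm {m : ℕ} (x w : Pt m) : w.2 ≤ x.2 + nrm (x - w) := by
  have := abs_snd_le_nrm (x - w)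
  rw [Prod.snd_sub, abs_sub_comm] at this
  linarith [le_abs_self (w.2 - x.2)]

@[fun_prop]
theorem continuous_nrm {m : ℕ} : Continuous (nrm : Pt m → ℝ) := by
  unfold nrm
  fun_prop

theorem nrm_rpow_le_norm_rpow {m : ℕ} {e : ℝ} (he : e ≤ 0) (v : Pt m) : nrm v ^ e ≤ ‖v‖ ^ e := by
  rcases (norm_nonneg v).eq_or_lt with h | h
  · simp [norm_eq_zero.1 h.symm, nrm]
  · exact rpow_le_rpow_of_nonpos h (norm_le_nrm v) he

theorem measurableSet_Dbox {m : ℕ} (w : EuclideanSpace ℝ (Fin m)) (a b : ℝ) :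
    MeasurableSet (Dbox w a b) := by
  unfold Dbox
  measurability

theorem lintegral_Dbox_nrm_rpow_le {m : ℕ} {e : ℝ} (he : e ≤ 0) {x : Pt m} (hx0 : 0 ≤ x.2)
    (hx1 : x.2 ≤ 1) :
    ∫⁻ w in Dbox x.1 1 1, ENNReal.ofReal (nrm (x - w) ^ e) ≤
      ∫⁻ v in ball (0 : Pt m) 1, ENNReal.ofReal (‖v‖ ^ e) := by
  have hsub : Dbox x.1 1 1 ⊆ (· - x) ⁻¹' ball (0 : Pt m) 1 := by
    rintro w ⟨hw, hw0, hw1⟩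
    simp only [mem_preimage, mem_ball_zero_iff, Prod.norm_def, Prod.fst_sub, Prod.snd_sub,
      norm_eq_abs]
    exact max_lt hw (abs_sub_lt_iff.2 ⟨by linarith, by linarith⟩)
  calc ∫⁻ w in Dbox x.1 1 1, ENNReal.ofReal (nrm (x - w) ^ e)
      ≤ ∫⁻ w in (· - x) ⁻¹' ball (0 : Pt m) 1, ENNReal.ofReal (‖w - x‖ ^ e) :=
        (lintegral_mono fun w => ENNReal.ofReal_le_ofReal <| by
          rw [nrm_sub_comm]; exact nrm_rpow_le_norm_rpow he _).trans (lintegral_mono_set hsub)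
    _ = ∫⁻ v in ball (0 : Pt m) 1, ENNReal.ofReal (‖v‖ ^ e) :=
        (measurePreserving_sub_right volume x).setLIntegral_comp_preimage_emb
          (measurableEmbedding_subRight x) (fun v => ENNReal.ofReal (‖v‖ ^ e)) _

theorem exists_lintegral_Dbox_nrm_rpow_le {m : ℕ} {e : ℝ} (he : -(m + 1 : ℝ) < e) (he0 : e ≤ 0) :
    ∃ C > 0, ∀ x : Pt m, 0 ≤ x.2 → x.2 ≤ 1 →
      ∫⁻ w in Dbox x.1 1 1, ENNReal.ofReal (nrm (x - w) ^ e) ≤ ENNReal.ofReal C := by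
  set I := ∫⁻ v in ball (0 : Pt m) 1, ENNReal.ofReal (‖v‖ ^ e)
  have hI : I ≠ ⊤ := (lintegral_ball_norm_rpow_lt_top volume (by simp) (by simpa using he) 1).ne
  refine ⟨I.toReal + 1, by positivity, fun x hx0 hx1 => ?_⟩
  calc ∫⁻ w in Dbox x.1 1 1, ENNReal.ofReal (nrm (x - w) ^ e) ≤ I :=
        lintegral_Dbox_nrm_rpow_le he0 hx0 hx1
    _ = ENNReal.ofReal I.toReal := (ENNReal.ofReal_toReal hI).symm
    _ ≤ ENNReal.ofReal (I.toReal + 1) := ENNReal.ofReal_le_ofReal (by linarith)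

theorem integrand_le_mul_nrm_rpow {m : ℕ} {β₁ β₂ β₃ β₄ γ p s C : ℝ} (hs : 0 < s) (hγ : 0 ≤ γ)
    (hγp : γ ≤ p) (hC : 0 ≤ C)
    (hweight : ∀ u v : ℝ, 0 < u → u ≤ 1 → 0 < v → v ≤ 1 →
      min u v ^ β₁ * max u v ^ β₂ * log (1 + max u v / min u v) ^ β₃ *
        log (1 + 8 / max u v) ^ β₄ ≤ C * (u * v) ^ γ)
    {x y w z : Pt m} (hx : 0 < x.2) (hy : 0 < y.2) (hw : 0 < w.2) (hw1 : w.2 ≤ 1) (hz : 0 < z.2)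
    (hz1 : z.2 ≤ 1) :
    min (x.2 / nrm (w - x)) 1 ^ p * min (y.2 / nrm (z - y)) 1 ^ p *
        (min w.2 z.2 ^ β₁ * max w.2 z.2 ^ β₂ / (nrm (x - w) ^ s * nrm (y - z) ^ s)) *
        log (1 + max w.2 z.2 / min w.2 z.2) ^ β₃ * log (1 + 8 / max w.2 z.2) ^ β₄ ≤
      C * 4 ^ γ * x.2 ^ p * y.2 ^ p * nrm (x - w) ^ (γ - p - s) * nrm (y - z) ^ (γ - p - s) := by
  rw [nrm_sub_comm w x, nrm_sub_comm z y]
  exact min_div_one_rpow_mul_weight_div_rpow_le hs hγ hγp hC (hweight _ _ hw hw1 hz hz1) hx hy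
    (nrm_nonneg _) (nrm_nonneg _) hw.le hz.le (snd_le_snd_add_nrm x w) (snd_le_snd_add_nrm y z)

theorem stmt_6 (d : ℕ) (hd : 2 ≤ d) (α p β₁ β₂ β₃ β₄ : ℝ)
    (hα0 : 0 < α) (hα2 : α < 2)
    (hβ₁ : 0 ≤ β₁) (hβ₂ : 0 ≤ β₂) (hβ₃ : 0 ≤ β₃) (hβ₄ : 0 ≤ β₄)
    (h13 : 0 < β₃ → 0 < β₁) (h24 : 0 < β₄ → 0 < β₂)
    (hp1 : max (α - 1) 0 < p) (hp2 : p < α + (β₁ + min β₁ β₂) / 2) :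
    ∃ C : ℝ, 0 < C ∧
      ∀ x y : Pt (d - 1), 0 < x.2 → x.2 < 1 / 4 → 0 < y.2 → y.2 < 1 / 4 →
        3 < ‖x.1 - y.1‖ →
        (∫⁻ w in Dbox x.1 1 1, ∫⁻ z in Dbox y.1 1 1,
            ENNReal.ofReal
              ((min (x.2 / nrm (w - x)) 1) ^ p * (min (y.2 / nrm (z - y)) 1) ^ p *
                ((min w.2 z.2) ^ β₁ * (max w.2 z.2) ^ β₂ /
                  (nrm (x - w) ^ ((d : ℝ) - α) * nrm (y - z) ^ ((d : ℝ) - α))) *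
                (Real.log (1 + max w.2 z.2 / min w.2 z.2)) ^ β₃ *
                (Real.log (1 + 8 / max w.2 z.2)) ^ β₄))
          ≤ ENNReal.ofReal (C * x.2 ^ p * y.2 ^ p) := by
  have hp : 0 < p := (le_max_right _ _).trans_lt hp1
  have hcast : ((d - 1 : ℕ) : ℝ) + 1 = d := by rw [Nat.cast_sub (by omega)]; ring
  have hs : 0 < (d : ℝ) - α := by linarith [show (2 : ℝ) ≤ d by exact_mod_cast hd]
  obtain ⟨γ, hγ, hγp, hpγ, hγσ⟩ := exists_exponent_between hα0 hp hp2
  obtain ⟨CL, hCL, hweight⟩ := exists_weight_le_mul_rpow hβ₁ hβ₂ hβ₃ hβ₄ h13 h24 hγ hγσ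
  obtain ⟨C₁, hC₁, hbox⟩ := exists_lintegral_Dbox_nrm_rpow_le (m := d - 1)
    (e := γ - p - ((d : ℝ) - α)) (by linarith) (by linarith)
  refine ⟨CL * 4 ^ γ * C₁ * C₁, by positivity, fun x y hx hx4 hy hy4 _ => ?_⟩
  have hm : ∀ v : Pt (d - 1), Measurable fun w => nrm (v - w) ^ (γ - p - ((d : ℝ) - α)) :=
    fun v => by fun_prop
  calc _ ≤ ENNReal.ofReal (CL * 4 ^ γ * x.2 ^ p * y.2 ^ p * C₁ * C₁) :=
        setLIntegral_setLIntegral_le_of_le_mul (measurableSet_Dbox _ _ _)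
          (measurableSet_Dbox _ _ _) (hm x) (hm y)
          (fun _ => rpow_nonneg (nrm_nonneg _) _) (by positivity) hC₁.le
          (fun w hw z hz => integrand_le_mul_nrm_rpow hs hγ hγp hCL.le hweight hx hy hw.2.1
            hw.2.2.le hz.2.1 hz.2.2.le)
          (hbox x hx.le (by linarith)) (hbox y hy.le (by linarith))
    _ = ENNReal.ofReal (CL * 4 ^ γ * C₁ * C₁ * x.2 ^ p * y.2 ^ p) := by congr 1; ring

end
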